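/- arXiv:2102.06427 — 3 statements merged into one kernel-verified Lean document; each statement's English description precedes it below -/
import Mathlib

section
/- For a terminating ARRIVAL instance, the run procedure terminates, i.e., the train reaches d or d̄ after finitely many steps. -/
variable {V : Type} [Fintype V] [DecidableEq V]

/-- An ARRIVAL instance: origin `o` and two successor functions into `V ⊕ Bool`,
where `Sum.inr false` is the destination `d` and `Sum.inr true` is `d̄`. -/
structure Arrival (V : Type) where
  o : V
  sEven : V → V ⊕ Bool
  sOdd : V → V ⊕ Bool

/-- Destination predicate. -/
def DestP {V : Type} : V ⊕ Bool → Prop := fun u => ∃ t, u = Sum.inr t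

/-- Edge relation of the switch graph (proper edges only). -/
def Arrival.Edge (A : Arrival V) (u w : V ⊕ Bool) : Prop :=
  ∃ x : V, u = Sum.inl x ∧ (w = A.sEven x ∨ w = A.sOdd x)

/-- There is a directed walk of length `m` from `u` to a vertex satisfying `P`. -/
def Arrival.PathLen (A : Arrival V) (u : V ⊕ Bool) (P : V ⊕ Bool → Prop) (m : ℕ) : Prop :=
  ∃ f : ℕ → V ⊕ Bool, f 0 = u ∧ P (f m) ∧ ∀ i < m, A.Edge (f i) (f (i + 1))

/-- `m` is the length of a shortest directed path from `u` to a vertex satisfying `P`. -/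
def Arrival.ShortestLen (A : Arrival V) (u : V ⊕ Bool) (P : V ⊕ Bool → Prop) (m : ℕ) : Prop :=
  A.PathLen u P m ∧ ∀ m' < m, ¬ A.PathLen u P m'

/-- The instance is terminating: from every vertex a destination is reachable. -/
def Arrival.Terminating (A : Arrival V) : Prop :=
  ∀ v : V, ∃ m, A.PathLen (Sum.inl v) DestP m

/-- One step of the run procedure on states (position, switch configuration);
`false` means the current successor is the even one. Destinations are absorbing. -/
def Arrival.runStep [DecidableEq V] (A : Arrival V) :
    (V ⊕ Bool) × (V → Bool) → (V ⊕ Bool) × (V → Bool) := fun s =>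
  match s.1 with
  | Sum.inr _ => s
  | Sum.inl v => ((if s.2 v then A.sOdd v else A.sEven v),
      fun u => if u = v then !s.2 v else s.2 u)

/-- The state of the run procedure after `k` proper steps (the train starts at `o`). -/
def Arrival.run [DecidableEq V] (A : Arrival V) (k : ℕ) : (V ⊕ Bool) × (V → Bool) :=
  A.runStep^[k] (Sum.inl A.o, fun _ => false)

lemma Arrival.run_succ (A : Arrival V) (k : ℕ) :
    A.run (k + 1) = A.runStep (A.run k) := by
  unfold Arrival.run
  exact Function.iterate_succ_apply' _ _ _

lemma Arrival.cfg_flip (A : Arrival V) {k : ℕ} {v : V}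
    (hk : (A.run k).1 = Sum.inl v) :
    (A.run (k + 1)).2 v = !(A.run k).2 v := by
  rw [A.run_succ k]
  unfold Arrival.runStep
  rw [hk]
  simp

lemma Arrival.pos_succ (A : Arrival V) {k : ℕ} {v : V}
    (hk : (A.run k).1 = Sum.inl v) :
    (A.run (k + 1)).1 = (if (A.run k).2 v then A.sOdd v else A.sEven v) := by
  rw [A.run_succ k]
  unfold Arrival.runStep
  rw [hk]

lemma Arrival.cfg_eq_of_ne (A : Arrival V) {k : ℕ} {v : V}
    (hk : (A.run k).1 ≠ Sum.inl v) :
    (A.run (k + 1)).2 v = (A.run k).2 v := by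
  rw [A.run_succ k]
  unfold Arrival.runStep
  rcases h : (A.run k).1 with w | t
  · have hwv : v ≠ w := by
      intro e; exact hk (by rw [h, e])
    simp [hwv]
  · simp

/-- `u` is visited infinitely often by the run. -/
def Arrival.Inf (A : Arrival V) (u : V ⊕ Bool) : Prop :=
  ∀ N : ℕ, ∃ k ≥ N, (A.run k).1 = u

/-- If `v` is visited infinitely often, then after a visit there is a later
visit with flipped switch. -/
lemma Arrival.next_visit_flip (A : Arrival V) {v : V}
    (hinf : A.Inf (Sum.inl v)) {k : ℕ} (hk : (A.run k).1 = Sum.inl v) :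
    ∃ k' > k, (A.run k').1 = Sum.inl v ∧ (A.run k').2 v = !(A.run k).2 v := by
  obtain ⟨k₀, hk₀ge, hk₀⟩ := hinf (k + 1)
  have hex : ∃ j, k + 1 ≤ j ∧ (A.run j).1 = Sum.inl v := ⟨k₀, hk₀ge, hk₀⟩
  classical
  set k' := Nat.find hex with hk'def
  obtain ⟨hk'ge, hk'pos⟩ := Nat.find_spec hex
  have key : ∀ d : ℕ, k + 1 + d ≤ k' → (A.run (k + 1 + d)).2 v = !(A.run k).2 v := by
    intro d
    induction d with
    | zero => intro _; simpa using A.cfg_flip hk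
    | succ d ih =>
      intro hd
      have hdlt : k + 1 + d < k' := by omega
      have hne : (A.run (k + 1 + d)).1 ≠ Sum.inl v := by
        intro heq
        exact absurd ⟨by omega, heq⟩ (Nat.find_min hex hdlt)
      have := A.cfg_eq_of_ne hne
      have ih' := ih (by omega)
      have : (A.run (k + 1 + d + 1)).2 v = !(A.run k).2 v := this.trans ih'
      simpa [Nat.add_assoc] using this
  have hle : k + 1 ≤ k' := hk'ge
  have hsum : k + 1 + (k' - (k + 1)) = k' := by omega
  have := key (k' - (k + 1)) (by omega)
  rw [hsum] at this
  exact ⟨k', by omega, hk'pos, this⟩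

/-- If `v` is visited infinitely often, it is visited infinitely often with
each switch value. -/
lemma Arrival.inf_with_switch (A : Arrival V) {v : V}
    (hinf : A.Inf (Sum.inl v)) (b : Bool) :
    ∀ N : ℕ, ∃ k ≥ N, (A.run k).1 = Sum.inl v ∧ (A.run k).2 v = b := by
  intro N
  obtain ⟨k, hkge, hk⟩ := hinf N
  by_cases hb : (A.run k).2 v = b
  · exact ⟨k, hkge, hk, hb⟩
  · obtain ⟨k', hk'gt, hk'pos, hk'cfg⟩ := A.next_visit_flip hinf hk
    refine ⟨k', by omega, hk'pos, ?_⟩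
    rw [hk'cfg]
    cases b <;> cases hcb : (A.run k).2 v <;> simp_all


/-- Both successors of an infinitely visited vertex are infinitely visited. -/
lemma Arrival.inf_succs (A : Arrival V) {v : V}
    (hinf : A.Inf (Sum.inl v)) :
    A.Inf (A.sEven v) ∧ A.Inf (A.sOdd v) := by
  constructor
  · intro N
    obtain ⟨k, hkge, hkpos, hkcfg⟩ := A.inf_with_switch hinf false N
    refine ⟨k + 1, by omega, ?_⟩
    rw [A.pos_succ hkpos, hkcfg]
    simp
  · intro N
    obtain ⟨k, hkge, hkpos, hkcfg⟩ := A.inf_with_switch hinf true N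
    refine ⟨k + 1, by omega, ?_⟩
    rw [A.pos_succ hkpos, hkcfg]
    simp

/-- For a terminating ARRIVAL instance, the run procedure terminates:
the train reaches a destination after finitely many steps. -/
theorem arrival_run_terminates (A : Arrival V) (hA : A.Terminating) :
    ∃ k : ℕ, ∃ t : Bool, (A.run k).1 = Sum.inr t := by
  by_contra hcon
  push_neg at hcon
  -- hcon : ∀ k t, (A.run k).1 ≠ Sum.inr t
  have hpos : ∀ k : ℕ, ∃ v : V, (A.run k).1 = Sum.inl v := by
    intro k
    rcases h : (A.run k).1 with v | t
    · exact ⟨v, rfl⟩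
    · exact absurd h (hcon k t)
  -- pigeonhole: some vertex is visited infinitely often
  have hpig : ∃ v : V, A.Inf (Sum.inl v) := by
    by_contra hno
    push_neg at hno
    simp only [Arrival.Inf, not_forall, not_exists] at hno
    have hN : ∀ v : V, ∃ N, ∀ k ≥ N, (A.run k).1 ≠ Sum.inl v := by
      intro v
      obtain ⟨N, hN⟩ := hno v
      exact ⟨N, fun k hk => by
        have := hN k
        push_neg at this
        exact this hk⟩
    choose N hNspec using hN
    classical
    set M := Finset.univ.sup N with hM
    obtain ⟨v, hv⟩ := hpos M
    exact hNspec v M (Finset.le_sup (Finset.mem_univ v)) hv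
  -- induction: no infinitely visited vertex has a path to destination
  have hind : ∀ m : ℕ, ∀ u : V ⊕ Bool, A.PathLen u DestP m → A.Inf u → False := by
    intro m
    induction m with
    | zero =>
      intro u ⟨f, hf0, hfP, _⟩ hinf
      obtain ⟨t, ht⟩ := hfP
      obtain ⟨k, _, hk⟩ := hinf 0
      exact hcon k t (by rw [hk, ← hf0, ht])
    | succ m ih =>
      intro u ⟨f, hf0, hfP, hfe⟩ hinf
      obtain ⟨x, hx, hsucc⟩ := hfe 0 (by omega)
      rw [hf0] at hx
      rw [hx] at hinf
      have hboth := A.inf_succs hinf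
      have hinf1 : A.Inf (f 1) := by
        rcases hsucc with h | h <;> rw [h]
        · exact hboth.1
        · exact hboth.2
      refine ih (f 1) ⟨fun i => f (i + 1), rfl, hfP, ?_⟩ hinf1
      intro i hi
      exact hfe (i + 1) (by omega)
  obtain ⟨v, hv⟩ := hpig
  obtain ⟨m, hm⟩ := hA v
  exact hind m (Sum.inl v) hm hv
end

section
/- Let A be a terminating ARRIVAL instance, S = {v_1,...,v_k} ⊆ V, w ∈ ℕ^k, and let x̂ be the edge-traversal profile of any execution of the Multi-Run procedure with these inputs. Then x̂ is a candidate switching flow w.r.t. S and w, and x̂ ≤ x componentwise for every candidate switching flow x w.r.t. S and w. In particular, x̂ is independent of the nondeterministic choices made during the procedure, and it is the unique minimizer of total flow among candidate switching flows. -/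
variable {V : Type} [Fintype V] [DecidableEq V]

/-- A flow on the edges of the switch graph: value on the yard edge `(Y,o)` and on
the even/odd edge slot out of each vertex. -/
structure SFlow (V : Type) where
  yard : ℕ
  ev : V → ℕ
  od : V → ℕ

/-- Outflow `x⁺(v)` at a vertex `v ∈ V`. -/
def SFlow.out {V : Type} (x : SFlow V) (v : V) : ℕ := x.ev v + x.od v

/-- Inflow `x⁻(u)` at a vertex `u` of the switch graph. -/
def SFlow.into (A : Arrival V) (x : SFlow V) (u : V ⊕ Bool) : ℕ :=
  (if Sum.inl A.o = u then x.yard else 0) +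
    ∑ v : V, ((if A.sEven v = u then x.ev v else 0) + (if A.sOdd v = u then x.od v else 0))

/-- Total flow `Σ_e x_e`. -/
def SFlow.total [Fintype V] (x : SFlow V) : ℕ := x.yard + ∑ v : V, (x.ev v + x.od v)

/-- Switching flow: unit outflow at the yard, flow conservation at every `v ∈ V`,
and switching behavior `x_{(v,s_even(v))} - x_{(v,s_odd(v))} ∈ {0,1}`. -/
def IsSwitchingFlow (A : Arrival V) (x : SFlow V) : Prop :=
  x.yard = 1 ∧ (∀ v : V, x.out v = SFlow.into A x (Sum.inl v)) ∧
    ∀ v : V, x.od v ≤ x.ev v ∧ x.ev v ≤ x.od v + 1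

/-- Candidate switching flow w.r.t. `S` and prescribed outflows `w`. -/
def IsCandFlow (A : Arrival V) (S : Finset V) (w : V → ℕ) (x : SFlow V) : Prop :=
  x.yard = 1 ∧
  (∀ v : V, v ∉ S → x.out v = SFlow.into A x (Sum.inl v)) ∧
  (∀ v ∈ S, x.out v = w v) ∧
  ∀ v : V, x.od v ≤ x.ev v ∧ x.ev v ≤ x.od v + 1

/-- State of the Multi-Run procedure: `ev/od` count edge traversals so far,
`t` counts trains currently present at each vertex, and `sw v = true` means the
current successor of `v` is the odd one. -/
structure MState (V : Type) where
  ev : V → ℕ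
  od : V → ℕ
  t : V ⊕ Bool → ℕ
  sw : V → Bool

/-- Current successor. -/
def Arrival.curr (A : Arrival V) (s : MState V) (v : V) : V ⊕ Bool :=
  if s.sw v then A.sOdd v else A.sEven v

/-- Next successor. -/
def Arrival.nxt (A : Arrival V) (s : MState V) (v : V) : V ⊕ Bool :=
  if s.sw v then A.sEven v else A.sOdd v

/-- Initial state of the Multi-Run procedure: one train is started from the yard
(arriving at `o`) and `w v` trains are started from each `v ∈ S`, with `⌈w v/2⌉`
moving to the even successor and `⌊w v/2⌋` to the odd successor. -/
def mInit (A : Arrival V) (S : Finset V) (w : V → ℕ) : MState V where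
  ev := fun v => if v ∈ S then (w v + 1) / 2 else 0
  od := fun v => if v ∈ S then w v / 2 else 0
  t := fun u => (if Sum.inl A.o = u then 1 else 0) +
      ∑ v ∈ S, ((if A.sEven v = u then (w v + 1) / 2 else 0) +
        (if A.sOdd v = u then w v / 2 else 0))
  sw := fun _ => false

/-- One iteration of the Multi-Run procedure: move `τ` of the trains waiting at `v`,
`⌈τ/2⌉` to the current successor and `⌊τ/2⌋` to the next one, swapping the
successors if `τ` is odd. -/
def MStepAt (A : Arrival V) (v : V) (τ : ℕ) (s s' : MState V) : Prop :=
  1 ≤ τ ∧ τ ≤ s.t (Sum.inl v) ∧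
  s'.ev = (fun u => s.ev u + if u = v then (if s.sw v then τ / 2 else (τ + 1) / 2) else 0) ∧
  s'.od = (fun u => s.od u + if u = v then (if s.sw v then (τ + 1) / 2 else τ / 2) else 0) ∧
  s'.t = (fun u => (s.t u - if u = Sum.inl v then τ else 0) +
      ((if A.curr s v = u then (τ + 1) / 2 else 0) + (if A.nxt s v = u then τ / 2 else 0))) ∧
  s'.sw = fun u => if u = v then Bool.xor (s.sw v) (τ % 2 == 1) else s.sw u

/-- One (nondeterministic) iteration: some vertex outside `S` with waiting trains is picked. -/
def MStep (A : Arrival V) (S : Finset V) (s s' : MState V) : Prop :=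
  ∃ v ∉ S, ∃ τ, MStepAt A v τ s s'

/-- No trains are waiting outside `S`. -/
def IsFinal (S : Finset V) (s : MState V) : Prop :=
  ∀ v : V, v ∉ S → s.t (Sum.inl v) = 0

/-- Edge-traversal profile of a Multi-Run state. -/
def flowOf {V : Type} (s : MState V) : SFlow V := ⟨1, s.ev, s.od⟩

/-- Invariant maintained along the Multi-Run procedure. -/
def MInv (A : Arrival V) (S : Finset V) (w : V → ℕ) (s : MState V) : Prop :=
  (∀ v ∈ S, s.ev v = (w v + 1) / 2 ∧ s.od v = w v / 2) ∧
  (∀ v ∉ S, s.ev v = s.od v + (if s.sw v then 1 else 0)) ∧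
  (∀ v ∉ S, s.t (Sum.inl v) + (s.ev v + s.od v) = SFlow.into A (flowOf s) (Sum.inl v))

lemma into_mono (A : Arrival V) {y x : SFlow V} (hy : y.yard = x.yard)
    (h : ∀ v, y.ev v ≤ x.ev v ∧ y.od v ≤ x.od v) (u : V ⊕ Bool) :
    SFlow.into A y u ≤ SFlow.into A x u := by
  unfold SFlow.into
  refine add_le_add (by rw [hy]) (Finset.sum_le_sum fun v _ => add_le_add ?_ ?_) <;>
    split_ifs <;> simp [(h v).1, (h v).2]

lemma into_step (A : Arrival V) (v : V) (τ : ℕ) (s s' : MState V)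
    (h : MStepAt A v τ s s') (u : V ⊕ Bool) :
    SFlow.into A (flowOf s') u = SFlow.into A (flowOf s) u +
      ((if A.curr s v = u then (τ + 1) / 2 else 0) + (if A.nxt s v = u then τ / 2 else 0)) := by
  obtain ⟨-, -, hev, hod, -, -⟩ := h
  have hd : ((if A.sEven v = u then (if s.sw v then τ / 2 else (τ + 1) / 2) else 0) +
      (if A.sOdd v = u then (if s.sw v then (τ + 1) / 2 else τ / 2) else 0)) =
      ((if A.curr s v = u then (τ + 1) / 2 else 0) + (if A.nxt s v = u then τ / 2 else 0)) := by
    cases hs : s.sw v <;> simp [Arrival.curr, Arrival.nxt, hs, add_comm]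
  simp only [SFlow.into, flowOf, hev, hod]
  rw [add_assoc]
  congr 1
  rw [← hd]
  have key : ∀ v' : V,
      ((if A.sEven v' = u then (s.ev v' + if v' = v then (if s.sw v then τ / 2 else (τ + 1) / 2) else 0) else 0) +
       (if A.sOdd v' = u then (s.od v' + if v' = v then (if s.sw v then (τ + 1) / 2 else τ / 2) else 0) else 0)) =
      ((if A.sEven v' = u then s.ev v' else 0) + (if A.sOdd v' = u then s.od v' else 0)) +
      (if v' = v then ((if A.sEven v = u then (if s.sw v then τ / 2 else (τ + 1) / 2) else 0) +
        (if A.sOdd v = u then (if s.sw v then (τ + 1) / 2 else τ / 2) else 0)) else 0) := by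
    intro v'
    by_cases hv : v' = v
    · subst hv; split_ifs <;> ring
    · simp [hv]
  rw [Finset.sum_congr rfl fun v' _ => key v', Finset.sum_add_distrib,
    Finset.sum_ite_eq' Finset.univ v]
  simp

lemma minv_init (A : Arrival V) (S : Finset V) (w : V → ℕ) :
    MInv A S w (mInit A S w) := by
  refine ⟨fun v hv => by simp [mInit, hv], fun v hv => by simp [mInit, hv], fun v hv => ?_⟩
  have hsum : ∀ u : V ⊕ Bool,
      (∑ v' : V, ((if A.sEven v' = u then (if v' ∈ S then (w v' + 1) / 2 else 0) else 0) +
        (if A.sOdd v' = u then (if v' ∈ S then w v' / 2 else 0) else 0))) =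
      ∑ v' ∈ S, ((if A.sEven v' = u then (w v' + 1) / 2 else 0) +
        (if A.sOdd v' = u then w v' / 2 else 0)) := by
    intro u
    rw [← Finset.sum_subset (Finset.subset_univ S)]
    · exact Finset.sum_congr rfl fun v' hv' => by simp [hv']
    · intro v' _ hv'; simp [hv']
  simp only [SFlow.into, flowOf, mInit, hv, if_neg hv]
  rw [hsum]
  simp

lemma minv_step (A : Arrival V) (S : Finset V) (w : V → ℕ) {v : V} (hv : v ∉ S)
    {τ : ℕ} {s s' : MState V} (h : MStepAt A v τ s s') (hI : MInv A S w s) :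
    MInv A S w s' := by
  obtain ⟨Ia, Ib, Ic⟩ := hI
  obtain ⟨h1, h2, hev, hod, ht, hsw⟩ := h
  refine ⟨?_, ?_, ?_⟩
  · intro u hu
    have hne : u ≠ v := fun e => hv (e ▸ hu)
    simpa [hev, hod, hne] using Ia u hu
  · intro u hu
    rw [hev, hod, hsw]
    by_cases huv : u = v
    · subst huv
      have hb := Ib u hu
      by_cases hτ2 : τ % 2 = 1 <;>
        cases hs : s.sw u <;> simp [hs, hτ2] at hb ⊢ <;> omega
    · simpa [huv] using Ib u hu
  · intro u hu
    rw [into_step A v τ s s' ⟨h1, h2, hev, hod, ht, hsw⟩, ht, hev, hod]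
    have hc := Ic u hu
    set D1 := (if A.curr s v = Sum.inl u then (τ + 1) / 2 else 0) with hD1
    set D2 := (if A.nxt s v = Sum.inl u then τ / 2 else 0) with hD2
    by_cases huv : u = v
    · subst huv
      simp only [if_pos rfl, if_true]
      set E1 := (if s.sw u = true then τ / 2 else (τ + 1) / 2) with hE1
      set E2 := (if s.sw u = true then (τ + 1) / 2 else τ / 2) with hE2
      have hτ : E1 + E2 = τ := by rw [hE1, hE2]; split_ifs <;> omega
      omega
    · have hne : (Sum.inl u : V ⊕ Bool) ≠ Sum.inl v := by simp [huv]
      simp only [if_neg huv, if_neg hne]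
      omega

lemma cand_on_S (A : Arrival V) (S : Finset V) (w : V → ℕ) {x : SFlow V}
    (hx : IsCandFlow A S w x) {v : V} (hv : v ∈ S) :
    x.ev v = (w v + 1) / 2 ∧ x.od v = w v / 2 := by
  have h1 := hx.2.2.1 v hv
  have h2 := hx.2.2.2 v
  simp only [SFlow.out] at h1
  omega

lemma bound_step (A : Arrival V) (S : Finset V) (w : V → ℕ) {x : SFlow V}
    (hx : IsCandFlow A S w x) {v : V} (hv : v ∉ S)
    {τ : ℕ} {s s' : MState V} (h : MStepAt A v τ s s') (hI : MInv A S w s)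
    (hB : ∀ u, s.ev u ≤ x.ev u ∧ s.od u ≤ x.od u) :
    ∀ u, s'.ev u ≤ x.ev u ∧ s'.od u ≤ x.od u := by
  have hI' := minv_step A S w hv h hI
  obtain ⟨h1, h2, hev, hod, ht, hsw⟩ := h
  intro u
  by_cases huv : u = v
  · subst huv
    have hmono := into_mono A (y := flowOf s) (x := x) (by simp [flowOf, hx.1]) hB (Sum.inl u)
    have hcons : x.out u = SFlow.into A x (Sum.inl u) := hx.2.1 u hv
    have hc := hI.2.2 u hv
    have hp' := hI'.2.1 u hv
    have hpx := hx.2.2.2 u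
    simp only [SFlow.out] at hcons
    rw [hev, hod] at hp'
    rw [hev, hod]
    simp only [if_pos rfl] at hp' ⊢
    have hτ : (if s.sw u then τ / 2 else (τ + 1) / 2) + (if s.sw u then (τ + 1) / 2 else τ / 2) = τ := by
      split_ifs <;> omega
    split_ifs at hp' ⊢ <;> omega
  · rw [hev, hod]
    simp only [if_neg huv, add_zero]
    exact hB u

/-- The edge-traversal profile of any execution of the Multi-Run procedure is a
candidate switching flow w.r.t. `S` and `w`, is componentwise below every candidate
switching flow, and is the unique minimizer of total flow among candidate switching flows
(hence it is independent of the nondeterministic choices). -/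
theorem multirun_profile_minimal (A : Arrival V) (hA : A.Terminating)
    (S : Finset V) (w : V → ℕ) (m : ℕ) (f : ℕ → MState V)
    (h0 : f 0 = mInit A S w) (hstep : ∀ i < m, MStep A S (f i) (f (i + 1)))
    (hfin : IsFinal S (f m)) :
    IsCandFlow A S w (flowOf (f m)) ∧
    (∀ x : SFlow V, IsCandFlow A S w x →
      ∀ v : V, (f m).ev v ≤ x.ev v ∧ (f m).od v ≤ x.od v) ∧
    ∀ x : SFlow V, IsCandFlow A S w x →
      (flowOf (f m)).total ≤ x.total ∧ (x.total = (flowOf (f m)).total → x = flowOf (f m)) := by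
  -- the invariant holds at every step
  have hInv : ∀ i ≤ m, MInv A S w (f i) := by
    intro i
    induction i with
    | zero => intro _; rw [h0]; exact minv_init A S w
    | succ n ih =>
      intro hn
      obtain ⟨v, hv, τ, hτ⟩ := hstep n (by omega)
      exact minv_step A S w hv hτ (ih (by omega))
  have hIm := hInv m le_rfl
  -- part 1: candidate flow
  have hcand : IsCandFlow A S w (flowOf (f m)) := by
    refine ⟨rfl, ?_, ?_, ?_⟩
    · intro v hv
      have h1 := hIm.2.2 v hv
      have hz := hfin v hv
      show (f m).ev v + (f m).od v = SFlow.into A (flowOf (f m)) (Sum.inl v)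
      omega
    · intro v hv
      have h1 := hIm.1 v hv
      show (f m).ev v + (f m).od v = w v
      omega
    · intro v
      by_cases hv : v ∈ S
      · have := hIm.1 v hv
        simp only [flowOf]
        omega
      · have := hIm.2.1 v hv
        simp only [flowOf]
        split_ifs at this <;> omega
  -- part 2: componentwise minimality
  have hmin : ∀ x : SFlow V, IsCandFlow A S w x →
      ∀ v : V, (f m).ev v ≤ x.ev v ∧ (f m).od v ≤ x.od v := by
    intro x hx
    have : ∀ i ≤ m, ∀ v : V, (f i).ev v ≤ x.ev v ∧ (f i).od v ≤ x.od v := by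
      intro i
      induction i with
      | zero =>
        intro _ v
        rw [h0]
        by_cases hv : v ∈ S
        · have := cand_on_S A S w hx hv
          simp [mInit, hv, this.1, this.2]
        · simp [mInit, hv]
      | succ n ih =>
        intro hn
        obtain ⟨v, hv, τ, hτ⟩ := hstep n (by omega)
        exact bound_step A S w hx hv hτ (hInv n (by omega)) (ih (by omega))
    exact this m le_rfl
  refine ⟨hcand, hmin, ?_⟩
  intro x hx
  have hB := hmin x hx
  have hsle : ∀ v ∈ Finset.univ, (f m).ev v + (f m).od v ≤ x.ev v + x.od v :=
    fun v _ => add_le_add (hB v).1 (hB v).2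
  have htot : (flowOf (f m)).total ≤ x.total := by
    simp only [SFlow.total, flowOf, hx.1]
    exact add_le_add le_rfl (Finset.sum_le_sum hsle)
  refine ⟨htot, fun heq => ?_⟩
  have hsum : ∑ v : V, (x.ev v + x.od v) = ∑ v : V, ((f m).ev v + (f m).od v) := by
    simp only [SFlow.total, flowOf, hx.1] at heq
    omega
  have hpt := (Finset.sum_eq_sum_iff_of_le hsle).mp hsum.symm
  have hev : x.ev = (f m).ev := funext fun v => by
    have h1 := (hB v).1
    have h2 := (hB v).2
    have h3 := hpt v (Finset.mem_univ v)
    omega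
  have hod : x.od = (f m).od := funext fun v => by
    have h1 := (hB v).1
    have h2 := (hB v).2
    have h3 := hpt v (Finset.mem_univ v)
    omega
  rw [show x = (⟨x.yard, x.ev, x.od⟩ : SFlow V) from rfl, hx.1, hev, hod]
  rfl
end

section
/- Let A be a terminating ARRIVAL instance with |V| = n and S ⊆ V of size k. Let N = 2^n and define D : {0,...,N}^k → {0,...,N}^k by D(w)_i = min(N, F(w)_i), where F(w)_i is the inflow at v_i in the minimal candidate switching flow w.r.t. S and w. Then any fixed point ŵ of D is also a fixed point of F (no capping occurs at a fixed point). -/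
variable {V : Type} [Fintype V] [DecidableEq V]

/-- Auxiliary: total inflow equals total flow. -/
lemma arrival_into_sum (A : Arrival V) (x : SFlow V) :
    ∑ u : V ⊕ Bool, SFlow.into A x u = x.total := by
  unfold SFlow.into SFlow.total
  rw [Finset.sum_add_distrib]
  congr 1
  · simp
  · rw [Finset.sum_comm]
    refine Finset.sum_congr rfl fun v _ => ?_
    rw [Finset.sum_add_distrib]
    simp

/-- Auxiliary: each outgoing edge of `v` carries at least `out v / 2` flow. -/
lemma arrival_into_ge_half (A : Arrival V) (x : SFlow V) (v : V)
    (hsw : x.od v ≤ x.ev v ∧ x.ev v ≤ x.od v + 1)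
    {u : V ⊕ Bool} (h : u = A.sEven v ∨ u = A.sOdd v) :
    x.out v / 2 ≤ SFlow.into A x u := by
  have hterm : (if A.sEven v = u then x.ev v else 0) +
      (if A.sOdd v = u then x.od v else 0) ≤ SFlow.into A x u := by
    unfold SFlow.into
    refine le_trans (Finset.single_le_sum (f := fun v' =>
      (if A.sEven v' = u then x.ev v' else 0) + (if A.sOdd v' = u then x.od v' else 0))
      (fun _ _ => Nat.zero_le _) (Finset.mem_univ v)) (Nat.le_add_left _ _)
  rcases h with h | h
  · rw [h] at hterm ⊢
    simp only [if_pos rfl] at hterm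
    have h1 : x.ev v ≤ SFlow.into A x (A.sEven v) := le_trans (Nat.le_add_right _ _) hterm
    have h2 := hsw.1
    unfold SFlow.out
    omega
  · rw [h] at hterm ⊢
    simp only [if_pos rfl] at hterm
    have h1 : x.od v ≤ SFlow.into A x (A.sOdd v) := le_trans (Nat.le_add_left _ _) hterm
    have h2 := hsw.2
    unfold SFlow.out
    omega

/-- Auxiliary: a path can be restarted at any intermediate point. -/
lemma arrival_pathlen_shift (A : Arrival V) {f : ℕ → V ⊕ Bool} {P : V ⊕ Bool → Prop} {m : ℕ}
    (he : ∀ i < m, A.Edge (f i) (f (i + 1))) (hP : P (f m)) {j : ℕ} (hj : j ≤ m) :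
    A.PathLen (f j) P (m - j) := by
  refine ⟨fun i => f (i + j), ?_, ?_, fun i hi => ?_⟩
  · show f (0 + j) = f j
    rw [Nat.zero_add]
  · show P (f (m - j + j))
    rwa [Nat.sub_add_cancel hj]
  · show A.Edge (f (i + j)) (f (i + 1 + j))
    have h2 : i + 1 + j = i + j + 1 := by omega
    rw [h2]
    exact he (i + j) (by omega)

/-- A fixed point of the capped function `D` is a fixed point of `F`: if `w ≤ N = 2 ^ n`
and for each `v ∈ S` the capped inflow `min N (x⁻(v))` of the minimal candidate switching
flow equals `w v`, then no capping occurs, i.e. `x⁻(v) = w v` for all `v ∈ S`. -/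
theorem capped_fixed_point_is_fixed_point (A : Arrival V) (hA : A.Terminating)
    (S : Finset V) (w : V → ℕ) (x : SFlow V) (N : ℕ) (hN : N = 2 ^ Fintype.card V)
    (hwle : ∀ v ∈ S, w v ≤ N)
    (hx : IsCandFlow A S w x)
    (hxmin : ∀ y : SFlow V, IsCandFlow A S w y → ∀ v : V, x.ev v ≤ y.ev v ∧ x.od v ≤ y.od v)
    (hfix : ∀ v ∈ S, min N (SFlow.into A x (Sum.inl v)) = w v) :
    ∀ v ∈ S, SFlow.into A x (Sum.inl v) = w v := by
  intro v₀ hv₀S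
  by_contra hne
  obtain ⟨hyard, hcons, hout, hsw⟩ := hx
  set n := Fintype.card V with hn
  -- inflow dominates w on S
  have hge : ∀ v ∈ S, w v ≤ SFlow.into A x (Sum.inl v) := by
    intro v hv
    have h1 := hfix v hv
    have h2 := hwle v hv
    omega
  have hv₀ : N < SFlow.into A x (Sum.inl v₀) ∧ w v₀ = N := by
    have h1 := hfix v₀ hv₀S
    have h2 := hwle v₀ hv₀S
    omega
  -- global flow accounting
  have hsum : (∑ v : V, SFlow.into A x (Sum.inl v)) +
      (SFlow.into A x (Sum.inr true) + SFlow.into A x (Sum.inr false)) =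
      1 + ∑ v : V, x.out v := by
    have h1 := arrival_into_sum A x
    rw [Fintype.sum_sum_type, Fintype.sum_bool] at h1
    have h2 : x.total = 1 + ∑ v : V, x.out v := by
      unfold SFlow.total
      rw [hyard]
      congr 1
    rw [h2] at h1
    exact h1
  have hsplit1 : ∑ v ∈ S, SFlow.into A x (Sum.inl v) + ∑ v ∈ Sᶜ, SFlow.into A x (Sum.inl v) =
      ∑ v : V, SFlow.into A x (Sum.inl v) := Finset.sum_add_sum_compl S _
  have hsplit2 : ∑ v ∈ S, x.out v + ∑ v ∈ Sᶜ, x.out v = ∑ v : V, x.out v :=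
    Finset.sum_add_sum_compl S _
  have hcomp : ∑ v ∈ Sᶜ, x.out v = ∑ v ∈ Sᶜ, SFlow.into A x (Sum.inl v) :=
    Finset.sum_congr rfl fun v hv => hcons v (by simpa using hv)
  have hSout : ∑ v ∈ S, x.out v = ∑ v ∈ S, w v :=
    Finset.sum_congr rfl fun v hv => hout v hv
  have key : ∑ v ∈ S, SFlow.into A x (Sum.inl v) +
      (SFlow.into A x (Sum.inr true) + SFlow.into A x (Sum.inr false)) =
      1 + ∑ v ∈ S, w v := by omega
  have e1 : ∑ v ∈ S.erase v₀, SFlow.into A x (Sum.inl v) + SFlow.into A x (Sum.inl v₀) =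
      ∑ v ∈ S, SFlow.into A x (Sum.inl v) := Finset.sum_erase_add S _ hv₀S
  have e2 : ∑ v ∈ S.erase v₀, w v + w v₀ = ∑ v ∈ S, w v := Finset.sum_erase_add S _ hv₀S
  have hle : ∑ v ∈ S.erase v₀, w v ≤ ∑ v ∈ S.erase v₀, SFlow.into A x (Sum.inl v) :=
    Finset.sum_le_sum fun v hv => hge v (Finset.mem_of_mem_erase hv)
  have hdt : SFlow.into A x (Sum.inr true) = 0 := by omega
  have hdf : SFlow.into A x (Sum.inr false) = 0 := by omega
  have hsumeq : ∑ v ∈ S.erase v₀, w v = ∑ v ∈ S.erase v₀, SFlow.into A x (Sum.inl v) := by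
    omega
  have heq : ∀ v ∈ S, v ≠ v₀ → SFlow.into A x (Sum.inl v) = w v := by
    intro v hv hvne
    have hv' : v ∈ S.erase v₀ := Finset.mem_erase.2 ⟨hvne, hv⟩
    have := (Finset.sum_eq_sum_iff_of_le
      (fun i hi => hge i (Finset.mem_of_mem_erase hi))).1 hsumeq v hv'
    exact this.symm
  have out_eq : ∀ u : V, u ≠ v₀ → x.out u = SFlow.into A x (Sum.inl u) := by
    intro u hu
    by_cases hus : u ∈ S
    · rw [hout u hus, heq u hus hu]
    · exact hcons u hus
  -- shortest path from v₀ to a destination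
  have hex := hA v₀
  obtain ⟨m, hm, hmin⟩ : ∃ m, A.PathLen (Sum.inl v₀) DestP m ∧
      ∀ m' < m, ¬ A.PathLen (Sum.inl v₀) DestP m' := by
    classical
    exact ⟨Nat.find hex, Nat.find_spec hex, fun m' h => Nat.find_min hex h⟩
  obtain ⟨f, hf0, hfm, hfe⟩ := hm
  have hm1 : 1 ≤ m := by
    rcases Nat.eq_zero_or_pos m with h | h
    · subst h
      rw [hf0] at hfm
      obtain ⟨t, ht⟩ := hfm
      exact absurd ht (by simp)
    · exact h
  have hnr : ∀ j, 0 < j → j ≤ m → f j ≠ Sum.inl v₀ := by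
    intro j hj0 hjm hcontra
    have h1 := arrival_pathlen_shift A hfe hfm hjm
    rw [hcontra] at h1
    exact hmin (m - j) (by omega) h1
  have hdist : ∀ i j, i < j → j < m → f i ≠ f j := by
    intro i j hij hjm hEq
    have hpath : A.PathLen (Sum.inl v₀) DestP (m - (j - i)) := by
      refine ⟨fun t => if t ≤ i then f t else f (t + (j - i)), ?_, ?_, ?_⟩
      · show (if 0 ≤ i then f 0 else f (0 + (j - i))) = Sum.inl v₀
        rw [if_pos (Nat.zero_le i)]
        exact hf0
      · show DestP (if m - (j - i) ≤ i then f (m - (j - i)) else f (m - (j - i) + (j - i)))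
        rw [if_neg (by omega)]
        have h1 : m - (j - i) + (j - i) = m := by omega
        rw [h1]
        exact hfm
      · intro t ht
        show A.Edge (if t ≤ i then f t else f (t + (j - i)))
          (if t + 1 ≤ i then f (t + 1) else f (t + 1 + (j - i)))
        by_cases h1 : t + 1 ≤ i
        · rw [if_pos (by omega), if_pos h1]
          exact hfe t (by omega)
        · by_cases h2 : t ≤ i
          · have h3 : t = i := by omega
            subst h3
            rw [if_pos le_rfl, if_neg h1, hEq]
            have h4 : t + 1 + (j - t) = j + 1 := by omega
            rw [h4]
            exact hfe j hjm
          · rw [if_neg h2, if_neg h1]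
            have h4 : t + 1 + (j - i) = t + (j - i) + 1 := by omega
            rw [h4]
            exact hfe (t + (j - i)) (by omega)
    exact hmin (m - (j - i)) (by omega) hpath
  have hinl : ∀ j, j < m → ∃ u, f j = Sum.inl u := by
    intro j hj
    obtain ⟨u, hu, _⟩ := hfe j hj
    exact ⟨u, hu⟩
  choose vtx hvtx using hinl
  have hmn : m ≤ n := by
    have hinj : Function.Injective (fun a : Fin m => vtx a a.2) := by
      intro a b hab
      dsimp only at hab
      rcases lt_trichotomy (a : ℕ) (b : ℕ) with h | h | h
      · exact absurd (by rw [hvtx a a.2, hvtx b b.2, hab]) (hdist a b h b.2)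
      · exact Fin.ext h
      · exact absurd (by rw [hvtx b b.2, hvtx a a.2, hab]) (hdist b a h a.2)
    have h1 := Fintype.card_le_of_injective _ hinj
    rwa [Fintype.card_fin] at h1
  -- flow descent along the shortest path
  have keyd : ∀ j, j < m → ∃ v, f j = Sum.inl v ∧ 2 ^ (n - j) ≤ x.out v := by
    intro j
    induction j with
    | zero =>
      intro _
      refine ⟨v₀, hf0, ?_⟩
      have h1 := hout v₀ hv₀S
      have h2 := hv₀.2
      rw [Nat.sub_zero]
      omega
    | succ j IH =>
      intro hj1
      have hjm : j < m := by omega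
      obtain ⟨v, hfv, hov⟩ := IH hjm
      obtain ⟨v', hv', hsucc⟩ := hfe j hjm
      have hvv : v = v' := by
        have := hfv.symm.trans hv'
        exact Sum.inl.inj this
      subst hvv
      have hhalf : x.out v / 2 ≤ SFlow.into A x (f (j + 1)) :=
        arrival_into_ge_half A x v (hsw v) hsucc
      obtain ⟨u, hu⟩ : ∃ u, f (j + 1) = Sum.inl u := ⟨vtx (j + 1) hj1, hvtx (j + 1) hj1⟩
      have hune : u ≠ v₀ := by
        intro h
        subst h
        exact hnr (j + 1) (by omega) (by omega) hu
      have hpow : 2 ^ (n - (j + 1)) ≤ x.out v / 2 := by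
        have h3 : n - j = (n - (j + 1)) + 1 := by omega
        rw [h3, pow_succ] at hov
        omega
      refine ⟨u, hu, ?_⟩
      rw [out_eq u hune, ← hu]
      exact le_trans hpow hhalf
  -- final contradiction: positive flow into the destination
  obtain ⟨v, hfv, hov⟩ := keyd (m - 1) (by omega)
  obtain ⟨v', hv', hsucc⟩ := hfe (m - 1) (by omega)
  have hvv : v = v' := Sum.inl.inj (hfv.symm.trans hv')
  subst hvv
  have hhalf : x.out v / 2 ≤ SFlow.into A x (f (m - 1 + 1)) :=
    arrival_into_ge_half A x v (hsw v) hsucc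
  have hm' : m - 1 + 1 = m := by omega
  rw [hm'] at hhalf
  obtain ⟨t, ht⟩ := hfm
  rw [ht] at hhalf
  have hpow2 : 1 ≤ x.out v / 2 := by
    have h2 : 2 ≤ 2 ^ (n - (m - 1)) := by
      have h1 : 1 ≤ n - (m - 1) := by omega
      calc 2 = 2 ^ 1 := rfl
        _ ≤ 2 ^ (n - (m - 1)) := Nat.pow_le_pow_right (by norm_num) h1
    omega
  have hdest : SFlow.into A x (Sum.inr t) = 0 := by
    cases t
    · exact hdf
    · exact hdt
  omega
end
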